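/- (Irreducibility of the bosonic Fock space over the Weyl algebra.) Let σ be any type and let V = MvPolynomial σ ℂ. Suppose W is a ℂ-submodule of V that is invariant under multiplication by X_s for every s ∈ σ and invariant under the partial derivative pderiv s for every s ∈ σ. Then W = 0 or W = V. -/

import Mathlib

/-!
Differentiating a nonzero polynomial in a variable that occurs in it gives a nonzero polynomial
of smaller total degree (this needs characteristic zero), so a nonzero subspace closed under all
`pderiv s` contains a nonzero constant, hence `1`. A subspace containing `1` and closed under
multiplication by every `X s` contains every monomial, hence everything.
-/

namespace MvPolynomial

variable {σ R : Type*}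

theorem totalDegree_pderiv_le [CommSemiring R] (p : MvPolynomial σ R) (i : σ) :
    (pderiv i p).totalDegree ≤ p.totalDegree - 1 := by
  refine Finset.sup_le fun m hm => ?_
  have hmi : m + Finsupp.single i 1 ∈ p.support := by
    rw [mem_support_iff, coeff_pderiv] at hm
    exact mem_support_iff.mpr (left_ne_zero_of_mul hm)
  have := le_totalDegree hmi
  rw [Finsupp.sum_add_index' (fun _ => rfl) (fun _ _ _ => rfl), Finsupp.sum_single_index rfl]
    at this
  omega

theorem exists_pderiv_ne_zero [CommSemiring R] [NoZeroDivisors R] [CharZero R]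
    {p : MvPolynomial σ R} (hp : p.totalDegree ≠ 0) : ∃ i, pderiv i p ≠ 0 := by
  obtain ⟨m, hm, i, hmi⟩ : ∃ m ∈ p.support, ∃ i, m i ≠ 0 := by
    simpa [totalDegree_eq_zero_iff] using hp
  have hle : Finsupp.single i 1 ≤ m := Finsupp.single_le_iff.mpr (Nat.one_le_iff_ne_zero.mpr hmi)
  refine ⟨i, fun h => ?_⟩
  have hcoeff := coeff_pderiv (i := i) p (m - Finsupp.single i 1)
  rw [h, coeff_zero, tsub_add_cancel_of_le hle, Finsupp.tsub_apply, Finsupp.single_eq_same]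
    at hcoeff
  have hcast : ((m i - 1 : ℕ) : R) + 1 = m i := by
    rw [← Nat.cast_add_one, Nat.sub_add_cancel (Nat.one_le_iff_ne_zero.mpr hmi)]
  rw [hcast] at hcoeff
  exact mul_ne_zero (mem_support_iff.mp hm) (Nat.cast_ne_zero.mpr hmi) hcoeff.symm

theorem one_mem_of_pderiv_mem [Field R] [CharZero R] (W : Submodule R (MvPolynomial σ R))
    (hD : ∀ i, ∀ p ∈ W, pderiv i p ∈ W) {p : MvPolynomial σ R} (hpW : p ∈ W) (hp : p ≠ 0) :
    (1 : MvPolynomial σ R) ∈ W := by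
  induction hn : p.totalDegree using Nat.strong_induction_on generalizing p with
  | _ n ih =>
    rcases eq_or_ne n 0 with rfl | hn0
    · rw [totalDegree_eq_zero_iff_eq_C] at hn
      rw [hn] at hpW hp
      have ha : coeff 0 p ≠ 0 := fun h => hp (by rw [h, C_0])
      simpa [smul_eq_C_mul, ← C_mul, ha] using W.smul_mem (coeff 0 p)⁻¹ hpW
    · obtain ⟨i, hi⟩ := exists_pderiv_ne_zero (hn ▸ hn0)
      exact ih _ ((totalDegree_pderiv_le p i).trans_lt (by omega)) (hD i p hpW) hi rfl

theorem eq_top_of_one_mem_of_X_mul_mem [CommSemiring R] (W : Submodule R (MvPolynomial σ R))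
    (h1 : (1 : MvPolynomial σ R) ∈ W) (hX : ∀ i, ∀ p ∈ W, X i * p ∈ W) : W = ⊤ := by
  rw [eq_top_iff]
  rintro q -
  induction q using MvPolynomial.induction_on with
  | C a => simpa [smul_eq_C_mul] using W.smul_mem a h1
  | add p q hp hq => exact W.add_mem hp hq
  | mul_X p i hp => exact mul_comm (X i) p ▸ hX i p hp

end MvPolynomial

/-- Irreducibility of the bosonic Fock space over the Weyl algebra: a
ℂ-subspace of MvPolynomial σ ℂ invariant under multiplication by every X_s
and under every partial derivative pderiv s is 0 or everything. -/
theorem stmt_16 (σ : Type*) (W : Submodule ℂ (MvPolynomial σ ℂ))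
    (hX : ∀ (s : σ) (p : MvPolynomial σ ℂ), p ∈ W → MvPolynomial.X s * p ∈ W)
    (hD : ∀ (s : σ) (p : MvPolynomial σ ℂ), p ∈ W → MvPolynomial.pderiv s p ∈ W) :
    W = ⊥ ∨ W = ⊤ := by
  refine or_iff_not_imp_left.mpr fun hW => ?_
  obtain ⟨p, hpW, hp⟩ := W.ne_bot_iff.mp hW
  exact MvPolynomial.eq_top_of_one_mem_of_X_mul_mem W
    (MvPolynomial.one_mem_of_pderiv_mem W hD hpW hp) hX
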